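/- Let S = (P, L) be a generalized quadrangle of order (2,t) and let (R, ψ) be a faithful representation of S such that (t, |R|) ≠ (2, 2^4). If x and y are distinct points of P such that r_x r_y ∈ R_ψ, then x and y are collinear. -/

import Mathlib

open scoped Classical

/-- A slim partial linear space: a nonempty point set, a nonempty collection of
lines each of which is a 3-element set of points, such that any two distinct
points lie in at most one common line. -/
structure SlimPLS (P : Type*) where
  lines : Set (Finset P)
  nonempty_pts : Nonempty P
  nonempty_lines : lines.Nonempty
  three_points : ∀ l ∈ lines, l.card = 3
  unique_line : ∀ l₁ ∈ lines, ∀ l₂ ∈ lines, ∀ x y : P,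
    x ≠ y → x ∈ l₁ → y ∈ l₁ → x ∈ l₂ → y ∈ l₂ → l₁ = l₂

namespace SlimPLS

variable {P : Type*}

/-- Two points are collinear if they are distinct and lie on a common line. -/
def Collinear (S : SlimPLS P) (x y : P) : Prop :=
  x ≠ y ∧ ∃ l ∈ S.lines, x ∈ l ∧ y ∈ l

/-- The collinearity graph of a slim partial linear space. -/
def graph (S : SlimPLS P) : SimpleGraph P where
  Adj x y := S.Collinear x y
  symm := ⟨fun x y h => ⟨Ne.symm h.1, h.2.elim fun l hl => ⟨l, hl.1, hl.2.2, hl.2.1⟩⟩⟩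
  loopless := ⟨fun x h => h.1 rfl⟩

/-- `S` is a generalized quadrangle of order `(2, t)`: it is connected, no point
is collinear with all other points, every point is on exactly `t+1` lines, and
for every point `x` and line `l` with `x ∉ l` there is exactly one point of `l`
collinear with `x`. -/
def IsGQ (S : SlimPLS P) (t : ℕ) : Prop :=
  S.graph.Connected ∧
  (∀ x : P, ∃ y : P, y ≠ x ∧ ¬ S.Collinear x y) ∧
  (∀ x : P, {l | l ∈ S.lines ∧ x ∈ l}.ncard = t + 1) ∧
  (∀ x : P, ∀ l ∈ S.lines, x ∉ l → ∃! y : P, y ∈ l ∧ S.Collinear x y)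

/-- A set of points is an arc if its points are pairwise non-collinear. -/
def IsArc (S : SlimPLS P) (T : Set P) : Prop :=
  ∀ x ∈ T, ∀ y ∈ T, x ≠ y → ¬ S.Collinear x y

/-- `{a,b,c}` is a complete 3-arc: three pairwise distinct, pairwise
non-collinear points not contained in a 4-arc. -/
def Complete3Arc (S : SlimPLS P) (a b c : P) : Prop :=
  a ≠ b ∧ a ≠ c ∧ b ≠ c ∧ S.IsArc {a, b, c} ∧
  ∀ d : P, d ∉ ({a, b, c} : Set P) → ¬ S.IsArc (insert d {a, b, c})

/-- `{a,b,c}` is a complete 3-arc of the subset `Q`: three pairwise distinct,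
pairwise non-collinear points of `Q` not contained in a 4-arc inside `Q`. -/
def Complete3ArcIn (S : SlimPLS P) (Q : Set P) (a b c : P) : Prop :=
  a ∈ Q ∧ b ∈ Q ∧ c ∈ Q ∧ a ≠ b ∧ a ≠ c ∧ b ≠ c ∧ S.IsArc {a, b, c} ∧
  ∀ d ∈ Q, d ∉ ({a, b, c} : Set P) → ¬ S.IsArc (insert d {a, b, c})

/-- `Q` is a sub-generalized-quadrangle of order `(2,t)` of `S`: together with
the lines of `S` contained in it, `Q` is a `(2,t)`-GQ; in particular any line
meeting `Q` in at least two points is contained in `Q`. -/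
def IsSubGQ (S : SlimPLS P) (Q : Set P) (t : ℕ) : Prop :=
  Q.Nonempty ∧
  (∃ l ∈ S.lines, (l : Set P) ⊆ Q) ∧
  (∀ l ∈ S.lines, ∀ x ∈ l, ∀ y ∈ l, x ≠ y → x ∈ Q → y ∈ Q → (l : Set P) ⊆ Q) ∧
  (SimpleGraph.induce Q S.graph).Connected ∧
  (∀ x ∈ Q, ∃ y ∈ Q, y ≠ x ∧ ¬ S.Collinear x y) ∧
  (∀ x ∈ Q, {l | l ∈ S.lines ∧ x ∈ l ∧ (l : Set P) ⊆ Q}.ncard = t + 1) ∧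
  (∀ x ∈ Q, ∀ l ∈ S.lines, (l : Set P) ⊆ Q → x ∉ l → ∃! y : P, y ∈ l ∧ S.Collinear x y)

/-- `S` is a near hexagon: connected of diameter 3, no point collinear with all
other points, and for every point `x` and line `l` there is a unique point of
`l` nearest to `x`. -/
def IsNearHexagon (S : SlimPLS P) : Prop :=
  S.graph.Connected ∧
  (∀ x y : P, S.graph.dist x y ≤ 3) ∧
  (∃ x y : P, S.graph.dist x y = 3) ∧
  (∀ x : P, ∃ y : P, y ≠ x ∧ ¬ S.Collinear x y) ∧
  (∀ x : P, ∀ l ∈ S.lines, ∃! y : P, y ∈ l ∧ ∀ z ∈ l, S.graph.dist x y ≤ S.graph.dist x z)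

/-- `S` is dense: any two points at distance 2 have at least two common
neighbours. -/
def IsDense (S : SlimPLS P) : Prop :=
  ∀ x y : P, S.graph.dist x y = 2 →
    ∃ u v : P, u ≠ v ∧ S.Collinear x u ∧ S.Collinear u y ∧ S.Collinear x v ∧ S.Collinear v y

/-- `Q` is a quad: a convex subset of diameter 2 in which no point is collinear
with all other points of `Q`. -/
def IsQuad (S : SlimPLS P) (Q : Set P) : Prop :=
  (∀ u ∈ Q, ∀ v ∈ Q, ∀ w : P,
      S.graph.dist u w + S.graph.dist w v = S.graph.dist u v → w ∈ Q) ∧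
  (∀ u ∈ Q, ∀ v ∈ Q, S.graph.dist u v ≤ 2) ∧
  (∃ u ∈ Q, ∃ v ∈ Q, S.graph.dist u v = 2) ∧
  (∀ u ∈ Q, ∃ v ∈ Q, v ≠ u ∧ ¬ S.Collinear u v)

/-- A quad `Q` is of type `(2, t₂)` if every point of `Q` lies on exactly
`t₂ + 1` lines contained in `Q`. -/
def QuadType (S : SlimPLS P) (Q : Set P) (t₂ : ℕ) : Prop :=
  ∀ x ∈ Q, {l | l ∈ S.lines ∧ x ∈ l ∧ (l : Set P) ⊆ Q}.ncard = t₂ + 1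

/-- The point-quad pair `(x, Q)` is classical: there is a unique point `y ∈ Q`
nearest to `x`, with `d(x,z) = d(x,y) + d(y,z)` for all `z ∈ Q`. -/
def IsClassicalPair (S : SlimPLS P) (x : P) (Q : Set P) : Prop :=
  ∃! y : P, y ∈ Q ∧ ∀ z ∈ Q, S.graph.dist x z = S.graph.dist x y + S.graph.dist y z

/-- A quad is classical (big) if every point-quad pair with it is classical. -/
def IsClassicalQuad (S : SlimPLS P) (Q : Set P) : Prop :=
  ∀ x : P, S.IsClassicalPair x Q

/-- A subspace: any line containing two of its points is contained in it. -/
def IsSubspace (S : SlimPLS P) (X : Set P) : Prop :=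
  ∀ l ∈ S.lines, ∀ x ∈ l, ∀ y ∈ l, x ≠ y → x ∈ X → y ∈ X → (l : Set P) ⊆ X

/-- The subspace generated by a set of points. -/
def subspaceGen (S : SlimPLS P) (A : Set P) : Set P :=
  ⋂₀ {X | S.IsSubspace X ∧ A ⊆ X}

/-- `NPdim S` is the rank over `F₂` of the distance-3 adjacency matrix. -/
noncomputable def NPdim [Fintype P] (S : SlimPLS P) : ℕ :=
  Matrix.rank (Matrix.of fun x y : P => if S.graph.dist x y = 3 then (1 : ZMod 2) else 0)

/-- `dimV S` is the dimension of the universal representation module of `S`: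
the free `F₂`-vector space on the points modulo the span of the elements
`v_x + v_y + v_z` for the lines `{x,y,z}`. -/
noncomputable def dimV (S : SlimPLS P) : ℕ :=
  Module.finrank (ZMod 2)
    ((P →₀ ZMod 2) ⧸ Submodule.span (ZMod 2)
      {f : P →₀ ZMod 2 | ∃ l ∈ S.lines, f = ∑ x ∈ l, Finsupp.single x 1})

end SlimPLS

/-- A representation of a slim partial linear space `S`: an assignment of an
order-2 element `r x` of `R` to each point `x`, such that the images generate
`R` and for every line `{x,y,z}` the set `{1, r x, r y, r z}` is a Klein four
subgroup (`r x * r y = r z` for the three pairwise distinct points of a line). -/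
structure SlimPLS.Rep {P : Type*} (S : SlimPLS P) (R : Type*) [Group R] where
  r : P → R
  order_two : ∀ x : P, orderOf (r x) = 2
  gen : Subgroup.closure (Set.range r) = ⊤
  line_rel : ∀ l ∈ S.lines, ∀ x ∈ l, ∀ y ∈ l, ∀ z ∈ l,
    x ≠ y → x ≠ z → y ≠ z → r x * r y = r z

/-- A finite 2-group is extraspecial if its Frattini subgroup, commutator
subgroup and center coincide and have order 2. -/
def IsExtraspecial (G : Type*) [Group G] : Prop :=
  Finite G ∧ IsPGroup 2 G ∧ frattini G = commutator G ∧
    commutator G = Subgroup.center G ∧ Nat.card (Subgroup.center G) = 2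

/-! If `r_x r_y = r_z` with `x, y` noncollinear, then `z` is collinear with every common neighbour
of `x` and `y`, and for three common neighbours `u₀, u₁, u₂` the points `x * u₀`, `y * u₁`,
`z * u₂` form a line; comparing the images of this line gives `r_{u₀} r_{u₁} = r_{u₂}`.
By faithfulness, `x` and `y` then have at most three common neighbours, which forces `t = 2`.
In the resulting `GQ(2,2)` every point is collinear with or equal to one of `x, y, z, u₀`, so `R`
is generated by the four commuting involutions `r_x, r_y, r_{u₀}, r_{u₁}` and has order dividing
`2^4`; as it contains `1`, `r_x`, `r_y` and the six `r_v` with `v ∼ x`, its order is `2^4`. -/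

theorem commute_of_mul_self_eq_one {G : Type*} [Group G] {a b : G} (ha : a * a = 1)
    (hb : b * b = 1) (hab : a * b * (a * b) = 1) : Commute a b :=
  calc a * b = (a * b)⁻¹ := (inv_eq_of_mul_eq_one_right hab).symm
    _ = b * a := by rw [mul_inv_rev, inv_eq_of_mul_eq_one_right ha, inv_eq_of_mul_eq_one_right hb]

theorem card_dvd_prod_orderOf_of_closure_eq_top {G : Type*} [Group G] {s : Finset G}
    (hs : (s : Set G).Pairwise Commute) (hgen : Subgroup.closure (s : Set G) = ⊤) :
    Nat.card G ∣ ∏ g ∈ s, orderOf g := by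
  let H : s → Subgroup G := fun g => Subgroup.zpowers (g : G)
  have hcomm : Pairwise fun i j : s => ∀ a b : G, a ∈ H i → b ∈ H j → Commute a b := by
    rintro i j hij a b ⟨m, rfl⟩ ⟨n, rfl⟩
    exact (hs i.2 j.2 (Subtype.coe_injective.ne hij)).zpow_zpow m n
  have hsurj : Function.Surjective (Subgroup.noncommPiCoprod hcomm) := by
    rw [← MonoidHom.range_eq_top, Subgroup.noncommPiCoprod_range, eq_top_iff, ← hgen,
      Subgroup.closure_le]
    exact fun g hg => Subgroup.mem_iSup_of_mem ⟨g, hg⟩ (Subgroup.mem_zpowers g)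
  have hdvd := Subgroup.card_dvd_of_surjective _ hsurj
  rw [Nat.card_pi] at hdvd
  simpa [H, Nat.card_zpowers, Finset.prod_attach s orderOf] using hdvd

namespace SlimPLS

variable {P : Type*} {S : SlimPLS P} {t : ℕ} {p q s u v w x y z : P}

theorem Collinear.symm (h : S.Collinear p q) : S.Collinear q p :=
  ⟨h.1.symm, h.2.imp fun _ hl => ⟨hl.1, hl.2.2, hl.2.1⟩⟩

theorem isArc_triple (hpq : ¬ S.Collinear p q) (hps : ¬ S.Collinear p s)
    (hqs : ¬ S.Collinear q s) : S.IsArc {p, q, s} := by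
  intro a ha b hb hab hc
  simp only [Set.mem_insert_iff, Set.mem_singleton_iff] at ha hb
  rcases ha with rfl | rfl | rfl <;> rcases hb with rfl | rfl | rfl
  exacts [hab rfl, hpq hc, hps hc, hpq hc.symm, hab rfl, hqs hc, hps hc.symm, hqs hc.symm, hab rfl]

/-- The line through `p` and `q` (junk `∅` unless `p, q` are collinear). -/
noncomputable def line (S : SlimPLS P) (p q : P) : Finset P :=
  if h : S.Collinear p q then h.2.choose else ∅

theorem line_mem (h : S.Collinear p q) : S.line p q ∈ S.lines := by
  rw [line, dif_pos h]; exact h.2.choose_spec.1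

theorem left_mem_line (h : S.Collinear p q) : p ∈ S.line p q := by
  rw [line, dif_pos h]; exact h.2.choose_spec.2.1

theorem right_mem_line (h : S.Collinear p q) : q ∈ S.line p q := by
  rw [line, dif_pos h]; exact h.2.choose_spec.2.2

theorem line_eq (h : S.Collinear p q) {l : Finset P} (hl : l ∈ S.lines) (hp : p ∈ l)
    (hq : q ∈ l) : S.line p q = l :=
  S.unique_line _ (line_mem h) _ hl p q h.1 (left_mem_line h) (right_mem_line h) hp hq

theorem collinear_of_line_eq (hpq : S.Collinear p q) (hps : S.Collinear p s) (hqs : q ≠ s)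
    (he : S.line p q = S.line p s) : S.Collinear q s :=
  ⟨hqs, _, line_mem hpq, right_mem_line hpq, he ▸ right_mem_line hps⟩

/-- The point `p * q`: the third point of the line through `p` and `q` (junk unless `p, q` are
collinear). -/
noncomputable def third (S : SlimPLS P) (p q : P) : P :=
  if h : (((S.line p q).erase p).erase q).Nonempty then h.choose else p

theorem erase_erase_line (h : S.Collinear p q) :
    ((S.line p q).erase p).erase q = {S.third p q} := by
  have hcard : (((S.line p q).erase p).erase q).card = 1 := by
    rw [Finset.card_erase_of_mem (Finset.mem_erase.2 ⟨h.1.symm, right_mem_line h⟩),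
      Finset.card_erase_of_mem (left_mem_line h), S.three_points _ (line_mem h)]
  obtain ⟨a, ha⟩ := Finset.card_eq_one.1 hcard
  have hne : (((S.line p q).erase p).erase q).Nonempty := by
    rw [ha]; exact Finset.singleton_nonempty a
  have hthird : S.third p q = a := by
    rw [third, dif_pos hne]
    exact (Finset.eq_singleton_iff_unique_mem.1 ha).2 _ hne.choose_spec
  rw [ha, hthird]

theorem third_mem_erase_erase (h : S.Collinear p q) :
    S.third p q ∈ ((S.line p q).erase p).erase q := by
  rw [erase_erase_line h]; exact Finset.mem_singleton_self _

theorem third_ne_right (h : S.Collinear p q) : S.third p q ≠ q :=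
  (Finset.mem_erase.1 (third_mem_erase_erase h)).1

theorem third_ne_left (h : S.Collinear p q) : S.third p q ≠ p :=
  (Finset.mem_erase.1 (Finset.mem_erase.1 (third_mem_erase_erase h)).2).1

theorem third_mem_line (h : S.Collinear p q) : S.third p q ∈ S.line p q :=
  (Finset.mem_erase.1 (Finset.mem_erase.1 (third_mem_erase_erase h)).2).2

theorem mem_line_iff (h : S.Collinear p q) :
    s ∈ S.line p q ↔ s = p ∨ s = q ∨ s = S.third p q := by
  constructor
  · intro hs
    by_cases hsp : s = p
    · exact .inl hsp
    by_cases hsq : s = q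
    · exact .inr (.inl hsq)
    have hmem : s ∈ ((S.line p q).erase p).erase q :=
      Finset.mem_erase.2 ⟨hsq, Finset.mem_erase.2 ⟨hsp, hs⟩⟩
    rw [erase_erase_line h, Finset.mem_singleton] at hmem
    exact .inr (.inr hmem)
  · rintro (rfl | rfl | rfl)
    exacts [left_mem_line h, right_mem_line h, third_mem_line h]

theorem collinear_third_left (h : S.Collinear p q) : S.Collinear p (S.third p q) :=
  ⟨(third_ne_left h).symm, _, line_mem h, left_mem_line h, third_mem_line h⟩

theorem collinear_third_right (h : S.Collinear p q) : S.Collinear q (S.third p q) :=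
  ⟨(third_ne_right h).symm, _, line_mem h, right_mem_line h, third_mem_line h⟩

theorem third_comm (h : S.Collinear p q) : S.third p q = S.third q p := by
  have hmem : S.third p q ∈ S.line q p := line_eq h.symm (line_mem h) (right_mem_line h)
    (left_mem_line h) ▸ third_mem_line h
  rcases (mem_line_iff h.symm).1 hmem with he | he | he
  exacts [absurd he (third_ne_right h), absurd he (third_ne_left h), he]

namespace IsGQ

theorem mem_of_collinear_of_collinear (hGQ : S.IsGQ t) {l : Finset P} (hl : l ∈ S.lines)
    (hp : p ∈ l) (hq : q ∈ l) (hpq : p ≠ q) (hsp : S.Collinear s p) (hsq : S.Collinear s q) :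
    s ∈ l := by
  by_contra hs
  exact hpq ((hGQ.2.2.2 s l hl hs).unique ⟨hp, hsp⟩ ⟨hq, hsq⟩)

theorem eq_third_of_collinear (hGQ : S.IsGQ t) (h : S.Collinear p q) (hsp : S.Collinear s p)
    (hsq : S.Collinear s q) : s = S.third p q := by
  rcases (mem_line_iff h).1 (hGQ.mem_of_collinear_of_collinear (line_mem h) (left_mem_line h)
    (right_mem_line h) h.1 hsp hsq) with he | he | he
  exacts [absurd he hsp.1, absurd he hsq.1, he]

theorem eq_or_collinear (hGQ : S.IsGQ t) (h : S.Collinear p q) (s : P) :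
    s = p ∨ s = q ∨ S.Collinear p s ∨ S.Collinear q s ∨ S.Collinear (S.third p q) s := by
  by_cases hs : s ∈ S.line p q
  · rcases (mem_line_iff h).1 hs with rfl | rfl | rfl
    exacts [.inl rfl, .inr (.inl rfl), .inr (.inr (.inl (collinear_third_left h)))]
  · obtain ⟨m, ⟨hm, hsm⟩, -⟩ := hGQ.2.2.2 s _ (line_mem h) hs
    rcases (mem_line_iff h).1 hm with rfl | rfl | rfl
    exacts [.inr (.inr (.inl hsm.symm)), .inr (.inr (.inr (.inl hsm.symm))),
      .inr (.inr (.inr (.inr hsm.symm)))]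

theorem not_collinear_third (hGQ : S.IsGQ t) (h : S.Collinear p q) (hsq : S.Collinear s q)
    (hsp : ¬ S.Collinear s p) (hne : s ≠ p) :
    s ≠ S.third p q ∧ ¬ S.Collinear s (S.third p q) := by
  have hne' : s ≠ S.third p q := fun he => hsp (he ▸ collinear_third_left h).symm
  refine ⟨hne', fun hc => ?_⟩
  rcases (mem_line_iff h).1 (hGQ.mem_of_collinear_of_collinear (line_mem h) (right_mem_line h)
    (third_mem_line h) (third_ne_right h).symm hsq hc) with he | he | he
  exacts [hne he, hsq.1 he, hne' he]

theorem not_collinear_of_common_nbrs (hGQ : S.IsGQ t) (hxy : x ≠ y) (hxu : S.Collinear x u)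
    (hyu : S.Collinear y u) (hxv : S.Collinear x v) (hyv : S.Collinear y v) :
    ¬ S.Collinear u v := fun huv =>
  hxy ((hGQ.eq_third_of_collinear huv hxu hxv).trans
    (hGQ.eq_third_of_collinear huv hyu hyv).symm)

theorem collinear_third_third (hGQ : S.IsGQ t) (hxy : ¬ S.Collinear x y) (hne : x ≠ y)
    (hxu : S.Collinear x u) (hyu : S.Collinear y u) (hxv : S.Collinear x v)
    (hyv : S.Collinear y v) (huv : u ≠ v) : S.Collinear (S.third x u) (S.third y v) := by
  have huv' := hGQ.not_collinear_of_common_nbrs hne hxu hyu hxv hyv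
  obtain ⟨hay, hay'⟩ := hGQ.not_collinear_third hxu hyu (fun h => hxy h.symm) hne.symm
  obtain ⟨hav, hav'⟩ : v ≠ S.third x u ∧ ¬ S.Collinear v (S.third x u) := by
    rw [third_comm hxu]
    exact hGQ.not_collinear_third hxu.symm hxv.symm (fun h => huv' h.symm) huv.symm
  rcases hGQ.eq_or_collinear hyv (S.third x u) with h | h | h | h | h
  exacts [(hay h.symm).elim, (hav h.symm).elim, (hay' h).elim, (hav' h).elim, h.symm]

noncomputable def linesThrough (hGQ : S.IsGQ t) (x : P) : Finset (Finset P) :=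
  (Set.finite_of_ncard_ne_zero (s := {l | l ∈ S.lines ∧ x ∈ l})
    (by rw [hGQ.2.2.1 x]; exact t.succ_ne_zero)).toFinset

theorem mem_linesThrough (hGQ : S.IsGQ t) {l : Finset P} :
    l ∈ hGQ.linesThrough x ↔ l ∈ S.lines ∧ x ∈ l :=
  Set.Finite.mem_toFinset _

theorem card_linesThrough (hGQ : S.IsGQ t) (x : P) : (hGQ.linesThrough x).card = t + 1 := by
  rw [← hGQ.2.2.1 x, linesThrough, ← Set.ncard_coe_finset, Set.Finite.coe_toFinset]

theorem line_mem_linesThrough (hGQ : S.IsGQ t) (h : S.Collinear x p) :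
    S.line x p ∈ hGQ.linesThrough x :=
  hGQ.mem_linesThrough.2 ⟨line_mem h, left_mem_line h⟩

noncomputable def nbrs (hGQ : S.IsGQ t) (x : P) : Finset P :=
  (hGQ.linesThrough x).biUnion (·.erase x)

theorem mem_nbrs (hGQ : S.IsGQ t) : p ∈ hGQ.nbrs x ↔ S.Collinear x p := by
  simp only [nbrs, Finset.mem_biUnion, mem_linesThrough, Finset.mem_erase]
  constructor
  · rintro ⟨l, ⟨hl, hxl⟩, hpx, hpl⟩
    exact ⟨hpx.symm, l, hl, hxl, hpl⟩
  · intro h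
    exact ⟨S.line x p, ⟨line_mem h, left_mem_line h⟩, h.1.symm, right_mem_line h⟩

theorem card_nbrs (hGQ : S.IsGQ t) (x : P) : (hGQ.nbrs x).card = 2 * (t + 1) := by
  rw [nbrs, Finset.card_biUnion, Finset.sum_congr rfl (g := fun _ => 2), Finset.sum_const,
    card_linesThrough, smul_eq_mul, mul_comm]
  · intro l hl
    obtain ⟨hl, hxl⟩ := hGQ.mem_linesThrough.1 hl
    rw [Finset.card_erase_of_mem hxl, S.three_points l hl]
  · intro l₁ h₁ l₂ h₂ hne
    obtain ⟨h₁, hx₁⟩ := hGQ.mem_linesThrough.1 h₁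
    obtain ⟨h₂, hx₂⟩ := hGQ.mem_linesThrough.1 h₂
    refine Finset.disjoint_left.2 fun a ha₁ ha₂ => hne ?_
    rw [Finset.mem_erase] at ha₁ ha₂
    exact S.unique_line _ h₁ _ h₂ a x ha₁.1 ha₁.2 hx₁ ha₂.2 hx₂

noncomputable def commonNbrs (hGQ : S.IsGQ t) (x y : P) : Finset P :=
  (hGQ.nbrs x).filter (S.Collinear y)

theorem mem_commonNbrs (hGQ : S.IsGQ t) :
    u ∈ hGQ.commonNbrs x y ↔ S.Collinear x u ∧ S.Collinear y u := by
  rw [commonNbrs, Finset.mem_filter, mem_nbrs]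

theorem card_commonNbrs (hGQ : S.IsGQ t) (hxy : ¬ S.Collinear x y) (hne : x ≠ y) :
    (hGQ.commonNbrs x y).card = t + 1 := by
  rw [← hGQ.card_linesThrough x]
  have hyl : ∀ l ∈ hGQ.linesThrough x, y ∉ l := fun l hl hy =>
    hxy ⟨hne, l, (hGQ.mem_linesThrough.1 hl).1, (hGQ.mem_linesThrough.1 hl).2, hy⟩
  refine Finset.card_bij (fun u _ => S.line x u)
    (fun u hu => hGQ.line_mem_linesThrough (hGQ.mem_commonNbrs.1 hu).1) ?_ ?_
  · intro u hu u' hu' he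
    obtain ⟨hxu, hyu⟩ := hGQ.mem_commonNbrs.1 hu
    obtain ⟨hxu', hyu'⟩ := hGQ.mem_commonNbrs.1 hu'
    by_contra huu'
    exact hyl _ (hGQ.line_mem_linesThrough hxu) (hGQ.mem_of_collinear_of_collinear
      (line_mem hxu) (right_mem_line hxu) (he ▸ right_mem_line hxu') huu' hyu hyu')
  · intro l hl
    obtain ⟨hl', hxl⟩ := hGQ.mem_linesThrough.1 hl
    obtain ⟨m, ⟨hm, hym⟩, -⟩ := hGQ.2.2.2 y l hl' (hyl l hl)
    have hxm : S.Collinear x m := ⟨fun he => hxy (he ▸ hym).symm, l, hl', hxl, hm⟩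
    exact ⟨m, hGQ.mem_commonNbrs.2 ⟨hxm, hym⟩, line_eq hxm hl' hxl hm⟩

theorem isArc_commonNbrs (hGQ : S.IsGQ t) (hne : x ≠ y) : S.IsArc (hGQ.commonNbrs x y) := by
  intro u hu v hv huv
  rw [Finset.mem_coe, mem_commonNbrs] at hu hv
  exact hGQ.not_collinear_of_common_nbrs hne hu.1 hu.2 hv.1 hv.2

theorem mem_of_collinear_of_isArc (hGQ : S.IsGQ t) {Q : Set P} (hQ : S.IsSubspace Q)
    (hw : w ∈ Q) {V : Finset P} (hVQ : (V : Set P) ⊆ Q) (hwV : ∀ v ∈ V, S.Collinear w v)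
    (hV : S.IsArc V) (hcard : V.card = t + 1) (hp : S.Collinear w p) : p ∈ Q := by
  -- the lines `w v` with `v ∈ V` are pairwise distinct, so they are all the lines through `w`
  obtain ⟨v, hv, hl⟩ := Finset.surj_on_of_inj_on_of_card_le (fun v _ => S.line w v)
    (fun v hv => hGQ.line_mem_linesThrough (hwV v hv))
    (fun v v' hv hv' he => by_contra fun hne => hV v hv v' hv' hne
      (collinear_of_line_eq (hwV v hv) (hwV v' hv') hne he))
    (by rw [card_linesThrough, hcard]) _ (hGQ.line_mem_linesThrough hp)
  have hwv := hwV v hv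
  exact hQ _ (line_mem hwv) w (left_mem_line hwv) v (right_mem_line hwv) hwv.1 hw (hVQ hv)
    (Finset.mem_coe.2 (hl ▸ right_mem_line hp))

end IsGQ

namespace Rep

variable {R : Type*} [Group R] (ρ : S.Rep R)

theorem mul_self (p : P) : ρ.r p * ρ.r p = 1 := by
  rw [← pow_two, ← ρ.order_two p, pow_orderOf_eq_one]

theorem ne_one (p : P) : ρ.r p ≠ 1 := fun h => by
  simpa [h] using ρ.order_two p

theorem mul_third (h : S.Collinear p q) : ρ.r p * ρ.r q = ρ.r (S.third p q) :=
  ρ.line_rel _ (line_mem h) p (left_mem_line h) q (right_mem_line h) _ (third_mem_line h) h.1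
    (third_ne_left h).symm (third_ne_right h).symm

theorem commute_of_mul_eq (h : ρ.r p * ρ.r q = ρ.r w) : Commute (ρ.r p) (ρ.r q) :=
  commute_of_mul_self_eq_one (ρ.mul_self p) (ρ.mul_self q) (by rw [h, ρ.mul_self])

theorem commute_of_collinear (h : S.Collinear p q) : Commute (ρ.r p) (ρ.r q) :=
  ρ.commute_of_mul_eq (ρ.mul_third h)

theorem third_eq (hf : Function.Injective ρ.r) (h : S.Collinear p q)
    (hw : ρ.r p * ρ.r q = ρ.r w) : S.third p q = w :=
  hf ((ρ.mul_third h).symm.trans hw)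

theorem isSubspace_preimage (G : Subgroup R) : S.IsSubspace (ρ.r ⁻¹' G) := by
  intro l hl p hp q hq hpq hpG hqG w hw
  by_cases hwp : w = p
  · rwa [hwp]
  by_cases hwq : w = q
  · rwa [hwq]
  rw [Set.mem_preimage, ← ρ.line_rel l hl p hp q hq w hw hpq (Ne.symm hwp) (Ne.symm hwq)]
  exact G.mul_mem hpG hqG

theorem two_mul_add_five_le_card (hGQ : S.IsGQ t) (hf : Function.Injective ρ.r) [Finite R] :
    2 * t + 5 ≤ Nat.card R := by
  have := Fintype.ofFinite R
  obtain ⟨x⟩ := S.nonempty_pts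
  obtain ⟨y, hyx, hxy⟩ := hGQ.2.1 x
  have hpts : (insert x (insert y (hGQ.nbrs x))).card = 2 * t + 4 := by
    rw [Finset.card_insert_of_notMem, Finset.card_insert_of_notMem, hGQ.card_nbrs]
    · ring
    · exact fun hy => hxy (hGQ.mem_nbrs.1 hy)
    · simp only [Finset.mem_insert, hGQ.mem_nbrs, not_or]
      exact ⟨hyx.symm, fun h => h.1 rfl⟩
  have himg : (insert 1 ((insert x (insert y (hGQ.nbrs x))).image ρ.r)).card = 2 * t + 5 := by
    rw [Finset.card_insert_of_notMem, Finset.card_image_of_injective _ hf, hpts]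
    rw [Finset.mem_image]
    exact fun ⟨p, _, hp⟩ => ρ.ne_one p hp
  rw [← himg, Nat.card_eq_fintype_card]
  exact Finset.card_le_univ _

structure IsHyperbolic (x y z : P) : Prop where
  not_collinear : ¬ S.Collinear x y
  mul_eq : ρ.r x * ρ.r y = ρ.r z

namespace IsHyperbolic

variable {ρ}

theorem ne (h : ρ.IsHyperbolic x y z) : x ≠ y := by
  rintro rfl
  exact ρ.ne_one z (by rw [← h.mul_eq, ρ.mul_self])

theorem commute (h : ρ.IsHyperbolic x y z) : Commute (ρ.r x) (ρ.r y) :=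
  ρ.commute_of_mul_eq h.mul_eq

theorem symm (h : ρ.IsHyperbolic x y z) : ρ.IsHyperbolic y x z :=
  ⟨fun hc => h.not_collinear hc.symm, h.commute.eq.symm.trans h.mul_eq⟩

theorem rotate (hf : Function.Injective ρ.r) (h : ρ.IsHyperbolic x y z) :
    ρ.IsHyperbolic y z x := by
  have hyz : ρ.r y * ρ.r z = ρ.r x := by
    rw [← h.mul_eq, ← mul_assoc, ← h.commute.eq, mul_assoc, ρ.mul_self, mul_one]
  refine ⟨fun hc => h.not_collinear ?_, hyz⟩
  rw [← ρ.third_eq hf hc hyz]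
  exact (collinear_third_left hc).symm

theorem collinear (hGQ : S.IsGQ t) (hf : Function.Injective ρ.r) (h : ρ.IsHyperbolic x y z)
    (hxu : S.Collinear x u) (hyu : S.Collinear y u) : S.Collinear z u := by
  have hzx := (h.rotate hf).rotate hf
  by_contra hzu
  rcases hGQ.eq_or_collinear hxu z with hz | hz | hz | hz | hza
  · exact hzx.ne hz
  · exact hzx.not_collinear (hz ▸ hxu.symm)
  · exact hzx.not_collinear hz.symm
  · exact hzu hz.symm
  -- `r_z r_{x*u} = r_y r_u` makes `z * (x * u) = y * u` collinear with `x * u` and `u`: it is `x`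
  have hmul : ρ.r z * ρ.r (S.third x u) = ρ.r (S.third y u) :=
    calc ρ.r z * ρ.r (S.third x u) = ρ.r x * ρ.r y * (ρ.r x * ρ.r u) := by
          rw [h.mul_eq, ρ.mul_third hxu]
      _ = ρ.r y * ρ.r u := by
          rw [h.commute.eq, mul_assoc, ← mul_assoc (ρ.r x), ρ.mul_self, one_mul]
      _ = ρ.r (S.third y u) := ρ.mul_third hyu
  have hb := ρ.third_eq hf hza.symm hmul
  have hau := (collinear_third_right hxu).symm
  have hyx : S.third y u = x :=
    (hGQ.eq_third_of_collinear hau (hb ▸ collinear_third_right hza.symm).symm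
      (collinear_third_right hyu).symm).trans
    (hGQ.eq_third_of_collinear hau (collinear_third_left hxu) hxu).symm
  exact h.not_collinear (hyx ▸ collinear_third_left hyu).symm

theorem third_third (hGQ : S.IsGQ t) (hf : Function.Injective ρ.r) (h : ρ.IsHyperbolic x y z)
    (hxu : S.Collinear x u) (hyu : S.Collinear y u) :
    ρ.IsHyperbolic (S.third x u) (S.third y u) z := by
  have hmul : ρ.r (S.third x u) * ρ.r (S.third y u) = ρ.r z :=
    calc ρ.r (S.third x u) * ρ.r (S.third y u) = ρ.r x * ρ.r u * (ρ.r y * ρ.r u) := by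
          rw [ρ.mul_third hxu, ρ.mul_third hyu]
      _ = ρ.r x * ρ.r y * (ρ.r u * ρ.r u) := by
          simp only [mul_assoc]; rw [(ρ.commute_of_collinear hyu).symm.left_comm]
      _ = ρ.r z := by rw [ρ.mul_self, mul_one, h.mul_eq]
  refine ⟨fun hc => ?_, hmul⟩
  have hzx := (h.rotate hf).rotate hf
  refine (hGQ.not_collinear_third hxu (h.collinear hGQ hf hxu hyu) hzx.not_collinear hzx.ne).2 ?_
  rw [← ρ.third_eq hf hc hmul]
  exact (collinear_third_left hc).symm

theorem mul_eq_of_mem_commonNbrs (hGQ : S.IsGQ t) (hf : Function.Injective ρ.r)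
    (h : ρ.IsHyperbolic x y z) {u₀ u₁ u₂ : P} (hu₀ : u₀ ∈ hGQ.commonNbrs x y)
    (hu₁ : u₁ ∈ hGQ.commonNbrs x y) (hu₂ : u₂ ∈ hGQ.commonNbrs x y) (h₀₁ : u₀ ≠ u₁)
    (h₀₂ : u₀ ≠ u₂) (h₁₂ : u₁ ≠ u₂) : ρ.r u₀ * ρ.r u₁ = ρ.r u₂ := by
  obtain ⟨hx₀, hy₀⟩ := hGQ.mem_commonNbrs.1 hu₀
  obtain ⟨hx₁, hy₁⟩ := hGQ.mem_commonNbrs.1 hu₁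
  obtain ⟨hx₂, hy₂⟩ := hGQ.mem_commonNbrs.1 hu₂
  have hxz := ((h.rotate hf).rotate hf).symm
  have hyz := h.rotate hf
  have hab := hGQ.collinear_third_third h.not_collinear h.ne hx₀ hy₀ hx₁ hy₁ h₀₁
  have hac := hGQ.collinear_third_third hxz.not_collinear hxz.ne hx₀
    (h.collinear hGQ hf hx₀ hy₀) hx₂ (h.collinear hGQ hf hx₂ hy₂) h₀₂
  have hbc := hGQ.collinear_third_third hyz.not_collinear hyz.ne hy₁
    (h.collinear hGQ hf hx₁ hy₁) hy₂ (h.collinear hGQ hf hx₂ hy₂) h₁₂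
  have hline := ρ.mul_third hab
  rw [← hGQ.eq_third_of_collinear hab hac.symm hbc.symm, ← ρ.mul_third hx₀, ← ρ.mul_third hy₁,
    ← ρ.mul_third (h.collinear hGQ hf hx₂ hy₂), ← h.mul_eq, mul_assoc, ← mul_assoc (ρ.r u₀),
    ← (ρ.commute_of_collinear hy₀).eq] at hline
  simp only [mul_assoc] at hline
  exact mul_left_cancel (mul_left_cancel hline)

theorem two_le (hGQ : S.IsGQ t) (hf : Function.Injective ρ.r) (h : ρ.IsHyperbolic x y z) :
    2 ≤ t := by
  obtain ⟨u, hu⟩ : (hGQ.commonNbrs x y).Nonempty := by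
    rw [← Finset.card_pos, hGQ.card_commonNbrs h.not_collinear h.ne]; exact t.succ_pos
  obtain ⟨hxu, hyu⟩ := hGQ.mem_commonNbrs.1 hu
  have hzu := h.collinear hGQ hf hxu hyu
  have hxz := ((h.rotate hf).rotate hf).symm
  have hyz := h.rotate hf
  have hne {p q : P} (hp : S.Collinear u p) (hq : S.Collinear u q) (hpq : ¬ S.Collinear p q)
      (hpq' : p ≠ q) : S.line u p ≠ S.line u q := fun he =>
    hpq (collinear_of_line_eq hp hq hpq' he)
  have hsub : {S.line u x, S.line u y, S.line u z} ⊆ hGQ.linesThrough u := by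
    simp only [Finset.insert_subset_iff, Finset.singleton_subset_iff]
    exact ⟨hGQ.line_mem_linesThrough hxu.symm, hGQ.line_mem_linesThrough hyu.symm,
      hGQ.line_mem_linesThrough hzu.symm⟩
  have := Finset.card_le_card hsub
  rw [Finset.card_eq_three.2 ⟨_, _, _, hne hxu.symm hyu.symm h.not_collinear h.ne,
    hne hxu.symm hzu.symm hxz.not_collinear hxz.ne,
    hne hyu.symm hzu.symm hyz.not_collinear hyz.ne, rfl⟩, hGQ.card_linesThrough] at this
  omega

theorem le_two (hGQ : S.IsGQ t) (hf : Function.Injective ρ.r) (h : ρ.IsHyperbolic x y z) :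
    t ≤ 2 := by
  have hcard := hGQ.card_commonNbrs h.not_collinear h.ne
  obtain ⟨u₀, hu₀, u₁, hu₁, h₀₁⟩ := Finset.one_lt_card.1 (by rw [hcard]; linarith [h.two_le hGQ hf])
  have hrest : (hGQ.commonNbrs x y \ {u₀, u₁}).card ≤ 1 := by
    refine Finset.card_le_one.2 fun a ha b hb => hf ?_
    simp only [Finset.mem_sdiff, Finset.mem_insert, Finset.mem_singleton, not_or] at ha hb
    rw [← h.mul_eq_of_mem_commonNbrs hGQ hf hu₀ hu₁ ha.1 h₀₁ (Ne.symm ha.2.1) (Ne.symm ha.2.2),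
      h.mul_eq_of_mem_commonNbrs hGQ hf hu₀ hu₁ hb.1 h₀₁ (Ne.symm hb.2.1) (Ne.symm hb.2.2)]
  have := Finset.card_le_card_sdiff_add_card (s := hGQ.commonNbrs x y) (t := {u₀, u₁})
  have := Finset.card_le_two (a := u₀) (b := u₁)
  omega

theorem mem_or_collinear (hGQ : S.IsGQ t) (hf : Function.Injective ρ.r)
    (h : ρ.IsHyperbolic x y z) (hxu : S.Collinear x u) (hyu : S.Collinear y u) (p : P) :
    p ∈ ({x, y, z, u} : Set P) ∨ ∃ w ∈ ({x, y, z, u} : Set P), S.Collinear w p := by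
  rcases hGQ.eq_or_collinear hxu p with rfl | rfl | hp | hp | hap
  · simp
  · simp
  · exact .inr ⟨x, by simp, hp⟩
  · exact .inr ⟨u, by simp, hp⟩
  rcases hGQ.eq_or_collinear hyu p with rfl | rfl | hp | hp | hbp
  · simp
  · simp
  · exact .inr ⟨y, by simp, hp⟩
  · exact .inr ⟨u, by simp, hp⟩
  exact .inr ⟨z, by simp, (h.third_third hGQ hf hxu hyu).collinear hGQ hf hap hbp⟩

theorem eq_univ_of_isSubspace (hGQ : S.IsGQ 2) (hf : Function.Injective ρ.r)
    (h : ρ.IsHyperbolic x y z) {Q : Set P} (hQ : S.IsSubspace Q) (hx : x ∈ Q) (hy : y ∈ Q)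
    (hz : z ∈ Q) (hHQ : (hGQ.commonNbrs x y : Set P) ⊆ Q) : Q = Set.univ := by
  have hxz := ((h.rotate hf).rotate hf).symm
  have hyz := h.rotate hf
  have hH : ∀ w ∈ Q, (∀ v ∈ hGQ.commonNbrs x y, S.Collinear w v) →
      ∀ p, S.Collinear w p → p ∈ Q := fun w hw hwH _ =>
    hGQ.mem_of_collinear_of_isArc hQ hw hHQ hwH (hGQ.isArc_commonNbrs h.ne)
      (hGQ.card_commonNbrs h.not_collinear h.ne)
  obtain ⟨u, hu⟩ : (hGQ.commonNbrs x y).Nonempty := by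
    rw [← Finset.card_pos, hGQ.card_commonNbrs h.not_collinear h.ne]; exact Nat.succ_pos 2
  obtain ⟨hxu, hyu⟩ := hGQ.mem_commonNbrs.1 hu
  have hzu := h.collinear hGQ hf hxu hyu
  have hnu : ∀ p, S.Collinear u p → p ∈ Q := fun p hp => by
    refine hGQ.mem_of_collinear_of_isArc hQ (hHQ hu) (V := {x, y, z})
      (by simp [Set.insert_subset_iff, hx, hy, hz]) ?_ ?_
      (Finset.card_eq_three.2 ⟨x, y, z, h.ne, hxz.ne, hyz.ne, rfl⟩) hp
    · simp only [Finset.mem_insert, Finset.mem_singleton]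
      rintro v (rfl | rfl | rfl)
      exacts [hxu.symm, hyu.symm, hzu.symm]
    · push_cast
      exact isArc_triple h.not_collinear hxz.not_collinear hyz.not_collinear
  refine Set.eq_univ_of_forall fun p => ?_
  rcases h.mem_or_collinear hGQ hf hxu hyu p with hp | ⟨w, hw, hwp⟩
  · simp only [Set.mem_insert_iff, Set.mem_singleton_iff] at hp
    rcases hp with rfl | rfl | rfl | rfl
    exacts [hx, hy, hz, hHQ hu]
  · simp only [Set.mem_insert_iff, Set.mem_singleton_iff] at hw
    rcases hw with rfl | rfl | rfl | rfl
    · exact hH _ hx (fun v hv => (hGQ.mem_commonNbrs.1 hv).1) p hwp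
    · exact hH _ hy (fun v hv => (hGQ.mem_commonNbrs.1 hv).2) p hwp
    · exact hH _ hz (fun v hv => h.collinear hGQ hf (hGQ.mem_commonNbrs.1 hv).1
        (hGQ.mem_commonNbrs.1 hv).2) p hwp
    · exact hnu p hwp

theorem closure_eq_top (hGQ : S.IsGQ 2) (hf : Function.Injective ρ.r)
    (h : ρ.IsHyperbolic x y z) {u₀ u₁ u₂ : P} (hH : hGQ.commonNbrs x y = {u₀, u₁, u₂})
    (h₀₁ : u₀ ≠ u₁) (h₀₂ : u₀ ≠ u₂) (h₁₂ : u₁ ≠ u₂) :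
    Subgroup.closure {ρ.r x, ρ.r y, ρ.r u₀, ρ.r u₁} = ⊤ := by
  set G := Subgroup.closure ({ρ.r x, ρ.r y, ρ.r u₀, ρ.r u₁} : Set R)
  have hx : x ∈ ρ.r ⁻¹' G := Subgroup.subset_closure (by simp)
  have hy : y ∈ ρ.r ⁻¹' G := Subgroup.subset_closure (by simp)
  have hu₀ : u₀ ∈ ρ.r ⁻¹' G := Subgroup.subset_closure (by simp)
  have hu₁ : u₁ ∈ ρ.r ⁻¹' G := Subgroup.subset_closure (by simp)
  have hz : z ∈ ρ.r ⁻¹' G := by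
    rw [Set.mem_preimage, ← h.mul_eq]; exact G.mul_mem hx hy
  have hmem : ∀ u ∈ ({u₀, u₁, u₂} : Finset P), u ∈ hGQ.commonNbrs x y := fun u hu => hH ▸ hu
  have hu₂ : u₂ ∈ ρ.r ⁻¹' G := by
    rw [Set.mem_preimage, ← h.mul_eq_of_mem_commonNbrs hGQ hf (hmem u₀ (by simp))
      (hmem u₁ (by simp)) (hmem u₂ (by simp)) h₀₁ h₀₂ h₁₂]
    exact G.mul_mem hu₀ hu₁
  have hQ := h.eq_univ_of_isSubspace hGQ hf (ρ.isSubspace_preimage G) hx hy hz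
    (by rw [hH]; simp [Set.insert_subset_iff, hu₀, hu₁, hu₂])
  rw [eq_top_iff, ← ρ.gen, Subgroup.closure_le]
  rintro _ ⟨p, rfl⟩
  exact Set.eq_univ_iff_forall.1 hQ p

theorem pairwise_commute (hGQ : S.IsGQ t) (hf : Function.Injective ρ.r)
    (h : ρ.IsHyperbolic x y z) {u₀ u₁ u₂ : P} (hu₀ : u₀ ∈ hGQ.commonNbrs x y)
    (hu₁ : u₁ ∈ hGQ.commonNbrs x y) (hu₂ : u₂ ∈ hGQ.commonNbrs x y) (h₀₁ : u₀ ≠ u₁)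
    (h₀₂ : u₀ ≠ u₂) (h₁₂ : u₁ ≠ u₂) :
    (({ρ.r x, ρ.r y, ρ.r u₀, ρ.r u₁} : Finset R) : Set R).Pairwise Commute := by
  obtain ⟨hx₀, hy₀⟩ := hGQ.mem_commonNbrs.1 hu₀
  obtain ⟨hx₁, hy₁⟩ := hGQ.mem_commonNbrs.1 hu₁
  have hxy := h.commute
  have hx₀' := ρ.commute_of_collinear hx₀
  have hx₁' := ρ.commute_of_collinear hx₁
  have hy₀' := ρ.commute_of_collinear hy₀
  have hy₁' := ρ.commute_of_collinear hy₁
  have h₀₁' := ρ.commute_of_mul_eq (h.mul_eq_of_mem_commonNbrs hGQ hf hu₀ hu₁ hu₂ h₀₁ h₀₂ h₁₂)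
  push_cast
  simp [Set.pairwise_insert, hxy, hx₀', hx₁', hy₀', hy₁', h₀₁', hxy.symm, hx₀'.symm, hx₁'.symm,
    hy₀'.symm, hy₁'.symm, h₀₁'.symm]

theorem card_eq (hGQ : S.IsGQ t) (hf : Function.Injective ρ.r) (h : ρ.IsHyperbolic x y z) :
    t = 2 ∧ Nat.card R = 2 ^ 4 := by
  obtain rfl : t = 2 := le_antisymm (h.le_two hGQ hf) (h.two_le hGQ hf)
  obtain ⟨u₀, u₁, u₂, h₀₁, h₀₂, h₁₂, hH⟩ :=
    Finset.card_eq_three.1 (hGQ.card_commonNbrs h.not_collinear h.ne)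
  have hmem : ∀ u ∈ ({u₀, u₁, u₂} : Finset P), u ∈ hGQ.commonNbrs x y := fun u hu => hH ▸ hu
  have hcomm := h.pairwise_commute hGQ hf (hmem u₀ (by simp)) (hmem u₁ (by simp))
    (hmem u₂ (by simp)) h₀₁ h₀₂ h₁₂
  have hdvd := card_dvd_prod_orderOf_of_closure_eq_top hcomm
    (by push_cast; exact h.closure_eq_top hGQ hf hH h₀₁ h₀₂ h₁₂)
  rw [Finset.prod_congr rfl (g := fun _ => 2), Finset.prod_const] at hdvd
  · have hdvd16 : Nat.card R ∣ 2 ^ 4 := hdvd.trans (pow_dvd_pow 2 Finset.card_le_four)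
    have : Finite R := Nat.finite_of_card_ne_zero (ne_zero_of_dvd_ne_zero (by norm_num) hdvd16)
    have hlow := ρ.two_mul_add_five_le_card hGQ hf
    obtain ⟨m, hm, hR⟩ := (Nat.dvd_prime_pow Nat.prime_two).1 hdvd16
    rw [hR] at hlow ⊢
    interval_cases m <;> simp_all
  · simp only [Finset.mem_insert, Finset.mem_singleton]
    rintro g (rfl | rfl | rfl | rfl) <;> exact ρ.order_two _

end IsHyperbolic

end Rep

end SlimPLS

theorem gq_rep_product_in_image_general {P : Type*} (S : SlimPLS P) {t : ℕ}
    (hGQ : S.IsGQ t) {R : Type*} [Group R] (ρ : S.Rep R)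
    (hf : Function.Injective ρ.r)
    (hne : ¬ (t = 2 ∧ Nat.card R = 2 ^ 4))
    (x y : P) (h : ρ.r x * ρ.r y ∈ Set.range ρ.r) :
    S.Collinear x y := by
  by_contra hxy
  obtain ⟨z, hz⟩ := h
  exact hne (SlimPLS.Rep.IsHyperbolic.card_eq hGQ hf (z := z) ⟨hxy, hz.symm⟩)

/-- For a faithful representation of a `(2,t)`-GQ with
`(t, |R|) ≠ (2, 2^4)`, if `r_x r_y ∈ R_ψ` for distinct points `x, y`,
then `x` and `y` are collinear. -/
theorem gq_rep_product_in_image {P : Type*} (S : SlimPLS P) {t : ℕ}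
    (hGQ : S.IsGQ t) {R : Type*} [Group R] (ρ : S.Rep R)
    (hf : Function.Injective ρ.r)
    (hne : ¬ (t = 2 ∧ Nat.card R = 2 ^ 4))
    (x y : P) (hxy : x ≠ y) (h : ρ.r x * ρ.r y ∈ Set.range ρ.r) :
    S.Collinear x y :=
  gq_rep_product_in_image_general S hGQ ρ hf hne x y h
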